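/- arXiv:2604.09261 — 9 statements merged into one kernel-verified Lean document; each statement's English description precedes it below -/
import Mathlib

section
/- The function F is strictly monotone increasing on the positive reals: for all real numbers b₁, b₂ with 0 < b₁ < b₂, one has F(b₁) < F(b₂). -/
/-!
Substituting `y = 2 N₀ b + h p` and `c = h p` turns `F b` into `(y - c) log(1 + c / y) / (2 N₀ log 2)`,
so it suffices that `G y = (y - c) log(1 + c / y)` increases for `y > 0`. Its derivative is
`log(1 + c / y) - c (y - c) / (y (y + c))`, which is positive because `log(1 + x) > 2x / (x + 2)`
and, for `x = c / y`, `2x / (x + 2) = 2c / (2y + c)` exceeds `c (y - c) / (y (y + c))`.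
-/

open Real Set

lemma mul_sub_div_lt_log_one_add_div {c y : ℝ} (hc : 0 < c) (hy : 0 < y) :
    c * (y - c) / (y * (y + c)) < log (1 + c / y) :=
  calc c * (y - c) / (y * (y + c)) < 2 * (c / y) / (c / y + 2) := by
        rw [div_lt_div_iff₀ (by positivity) (by positivity)]
        field_simp
        nlinarith [mul_pos hc hy, mul_pos hc hc]
    _ < log (1 + c / y) := lt_log_one_add_of_pos (by positivity)

lemma hasDerivAt_sub_mul_log_one_add_div {c y : ℝ} (hy : y ≠ 0) (hyc : y + c ≠ 0) :
    HasDerivAt (fun y => (y - c) * log (1 + c / y))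
      (log (1 + c / y) - c * (y - c) / (y * (y + c))) y := by
  have hu : 1 + c / y ≠ 0 := by rw [one_add_div hy]; exact div_ne_zero hyc hy
  have hquot : HasDerivAt (fun y => 1 + c / y) (-c / y ^ 2) y := by
    simpa using ((hasDerivAt_const y c).div (hasDerivAt_id y) hy).const_add 1
  refine (((hasDerivAt_id' y).sub_const c).mul (hquot.log hu)).congr_deriv ?_
  rw [one_add_div hy]
  field_simp
  ring

theorem strictMonoOn_sub_mul_log_one_add_div {c : ℝ} (hc : 0 < c) :
    StrictMonoOn (fun y => (y - c) * log (1 + c / y)) (Ioi 0) := by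
  have hderiv : ∀ y ∈ Ioi (0 : ℝ), HasDerivAt (fun y => (y - c) * log (1 + c / y))
      (log (1 + c / y) - c * (y - c) / (y * (y + c))) y := fun y (hy : 0 < y) =>
    hasDerivAt_sub_mul_log_one_add_div hy.ne' (by positivity)
  refine strictMonoOn_of_deriv_pos (convex_Ioi 0)
    (fun y hy => (hderiv y hy).continuousAt.continuousWithinAt) fun y hy => ?_
  rw [interior_Ioi] at hy
  rw [(hderiv y hy).deriv, sub_pos]
  exact mul_sub_div_lt_log_one_add_div hc hy

/-- The function `F(b) = b * log₂(1 + h·p / (2·N₀·b + h·p))` is strictly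
monotone increasing on the positive reals: for all `0 < b₁ < b₂`, `F b₁ < F b₂`. -/
theorem stmt_0 (h p N₀ : ℝ) (hh : 0 < h) (hp : 0 < p) (hN : 0 < N₀)
    (F : ℝ → ℝ)
    (hF : ∀ b : ℝ, F b = b * Real.logb 2 (1 + h * p / (2 * N₀ * b + h * p)))
    (b₁ b₂ : ℝ) (hb₁ : 0 < b₁) (hb : b₁ < b₂) :
    F b₁ < F b₂ := by
  set G := fun y => (y - h * p) * log (1 + h * p / y)
  have hF_eq : ∀ b, F b = G (2 * N₀ * b + h * p) / (2 * N₀ * log 2) := fun b => by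
    rw [hF, logb]
    field_simp
    ring
  have hG : G (2 * N₀ * b₁ + h * p) < G (2 * N₀ * b₂ + h * p) :=
    strictMonoOn_sub_mul_log_one_add_div (by positivity)
      (show (0 : ℝ) < 2 * N₀ * b₁ + h * p by positivity)
      (show (0 : ℝ) < 2 * N₀ * b₂ + h * p by have := hb₁.trans hb; positivity) (by gcongr)
  rw [hF_eq, hF_eq]
  exact div_lt_div_of_pos_right hG (by positivity [log_pos one_lt_two])
end

section
/- As b tends to +∞, F(b) tends to the finite limit h·p / (2·N₀·ln 2). -/
open Filter Topology Real

lemma tendsto_log_one_add_div_atTop (c : ℝ) :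
    Tendsto (fun u : ℝ => log (1 + c / u)) atTop (𝓝 0) := by
  have h_arg : Tendsto (fun u : ℝ => 1 + c / u) atTop (𝓝 1) := by
    simpa using tendsto_const_nhds.add ((tendsto_const_nhds (x := c)).div_atTop tendsto_id)
  simpa [Function.comp_def] using (continuousAt_log one_ne_zero).tendsto.comp h_arg

/-- Substituting `u = a x + d` turns `x * log (1 + c / u)` into `(u log (1 + c/u) - d log (1 + c/u)) / a`,
whose first term tends to `c` and second to `0`. -/
lemma tendsto_mul_log_one_add_div_affine_atTop {a : ℝ} (ha : 0 < a) (c d : ℝ) :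
    Tendsto (fun x : ℝ => x * log (1 + c / (a * x + d))) atTop (𝓝 (c / a)) := by
  have hu : Tendsto (fun x : ℝ => a * x + d) atTop atTop :=
    tendsto_atTop_add_const_right _ d (tendsto_id.const_mul_atTop ha)
  have h_lim := ((tendsto_mul_log_one_add_div_atTop c).comp hu).sub
    (((tendsto_log_one_add_div_atTop c).comp hu).const_mul d) |>.div_const a
  rw [mul_zero, sub_zero] at h_lim
  refine h_lim.congr fun x => ?_
  simp only [Function.comp_apply]
  field_simp
  ring

theorem stmt_5_general (h p N₀ : ℝ) (hN : 0 < N₀)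
    (F : ℝ → ℝ)
    (hF : ∀ b : ℝ, F b = b * Real.logb 2 (1 + h * p / (2 * N₀ * b + h * p))) :
    Filter.Tendsto F Filter.atTop (nhds (h * p / (2 * N₀ * Real.log 2))) := by
  have h_lim := (tendsto_mul_log_one_add_div_affine_atTop (by positivity : 0 < 2 * N₀)
    (h * p) (h * p)).div_const (log 2)
  rw [div_div] at h_lim
  refine h_lim.congr fun b => ?_
  rw [hF, logb, mul_div_assoc]

/-- As `b → +∞`, `F(b) = b * log₂(1 + h·p / (2·N₀·b + h·p))` tends to the
finite limit `h·p / (2·N₀·ln 2)`. -/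
theorem stmt_5 (h p N₀ : ℝ) (hh : 0 < h) (hp : 0 < p) (hN : 0 < N₀)
    (F : ℝ → ℝ)
    (hF : ∀ b : ℝ, F b = b * Real.logb 2 (1 + h * p / (2 * N₀ * b + h * p))) :
    Filter.Tendsto F Filter.atTop (nhds (h * p / (2 * N₀ * Real.log 2))) :=
  stmt_5_general h p N₀ hN F hF
end

section
/- For every b > 0, F(b) < h·p / (2·N₀·ln 2); that is, the value of F on the positive reals is strictly below its limit at infinity. -/
/-!
Since `log (1 + u) < u` for `u > 0`, with `u = hp / (2N₀b + hp)` we get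
`b · ln (1 + u) < b · u < hp / (2N₀)`; dividing by `ln 2` gives the bound.
-/

open Real

lemma mul_div_mul_add_lt_div {a b c : ℝ} (ha : 0 < a) (hb : 0 < b) (hc : 0 < c) :
    b * (a / (c * b + a)) < a / c := by
  rw [← mul_div_assoc, div_lt_div_iff₀ (by positivity) hc]
  nlinarith [mul_pos ha ha]

lemma log_one_add_lt_self {u : ℝ} (hu : 0 < u) : log (1 + u) < u := by
  linarith [log_lt_sub_one_of_pos (by linarith : (0 : ℝ) < 1 + u) (by linarith)]

lemma mul_log_one_add_div_mul_add_lt_div {a b c : ℝ} (ha : 0 < a) (hb : 0 < b) (hc : 0 < c) :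
    b * log (1 + a / (c * b + a)) < a / c :=
  calc b * log (1 + a / (c * b + a)) < b * (a / (c * b + a)) :=
        mul_lt_mul_of_pos_left (log_one_add_lt_self (by positivity)) hb
    _ < a / c := mul_div_mul_add_lt_div ha hb hc

/-- For every `b > 0`, `F(b) < h·p / (2·N₀·ln 2)`: the value of `F` on the
positive reals is strictly below its limit at infinity. -/
theorem stmt_6 (h p N₀ : ℝ) (hh : 0 < h) (hp : 0 < p) (hN : 0 < N₀)
    (F : ℝ → ℝ)
    (hF : ∀ b : ℝ, F b = b * Real.logb 2 (1 + h * p / (2 * N₀ * b + h * p)))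
    (b : ℝ) (hb : 0 < b) :
    F b < h * p / (2 * N₀ * Real.log 2) := by
  rw [hF, logb, ← mul_div_assoc, ← div_div]
  exact div_lt_div_of_pos_right
    (mul_log_one_add_div_mul_add_lt_div (mul_pos hh hp) hb (by positivity))
    (log_pos one_lt_two)
end

section
/- For any real number c, the equation F(b) = c has exactly one solution b in the open interval (0, ∞) if and only if 0 < c < h·p / (2·N₀·ln 2). -/
/-!
In natural units `F b = rate (h p) (2 N₀) b / log 2` with `rate a k b = b log (1 + a / (k b + a))`.
For `a, k > 0` this function is continuous on `[0, ∞)`, vanishes at `0`, tends to `a / k` at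
infinity (as `x log (1 + t / x) → t`), and has positive derivative on `(0, ∞)` because
`log (1 + y) > 2y / (y + 2)`. Hence it maps `(0, ∞)` bijectively onto `(0, a / k)`.
-/

open Real Filter Topology Set

section ImageOfIoi

variable {α δ : Type*} [ConditionallyCompleteLinearOrder α] [TopologicalSpace α] [OrderTopology α]
  [DenselyOrdered α] [NoMaxOrder α] [LinearOrder δ] [TopologicalSpace δ] [OrderClosedTopology δ]
  {f : α → δ} {a : α} {l L : δ}

theorem StrictMonoOn.image_Ioi_subset_Ioo (hf : StrictMonoOn f (Ioi a))
    (hl : Tendsto f (𝓝[>] a) (𝓝 l)) (hL : Tendsto f atTop (𝓝 L)) :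
    f '' Ioi a ⊆ Ioo l L := by
  rintro _ ⟨x, hx, rfl⟩
  obtain ⟨y, hay, hyx⟩ := exists_between hx
  obtain ⟨z, hxz⟩ := exists_gt x
  have hly : l ≤ f y := le_of_tendsto hl <| by
    filter_upwards [Ioo_mem_nhdsGT hay] with w hw
    exact (hf hw.1 hay hw.2).le
  have : Nonempty α := ⟨a⟩
  have hzL : f z ≤ L := ge_of_tendsto hL <| by
    filter_upwards [eventually_ge_atTop z] with w hw
    exact hf.monotoneOn (hx.trans hxz) (hx.trans (hxz.trans_le hw)) hw
  exact ⟨hly.trans_lt (hf hay hx hyx), (hf hx (hx.trans hxz) hxz).trans_le hzL⟩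

theorem ContinuousOn.image_Ioi_eq_Ioo_of_strictMonoOn (hc : ContinuousOn f (Ioi a))
    (hf : StrictMonoOn f (Ioi a)) (hl : Tendsto f (𝓝[>] a) (𝓝 l))
    (hL : Tendsto f atTop (𝓝 L)) :
    f '' Ioi a = Ioo l L := by
  have : Nonempty α := ⟨a⟩
  have hl_le : 𝓝[>] a ≤ 𝓟 (Ioi a) := inf_le_right
  have hL_le : (atTop : Filter α) ≤ 𝓟 (Ioi a) := le_principal_iff.2 (Ioi_mem_atTop a)
  exact (hf.image_Ioi_subset_Ioo hl hL).antisymm <|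
    isPreconnected_Ioi.intermediate_value_Ioo hl_le hL_le hc hl hL

theorem ContinuousOn.existsUnique_eq_iff_of_strictMonoOn (hc : ContinuousOn f (Ioi a))
    (hf : StrictMonoOn f (Ioi a)) (hl : Tendsto f (𝓝[>] a) (𝓝 l))
    (hL : Tendsto f atTop (𝓝 L)) (c : δ) :
    (∃! x, a < x ∧ f x = c) ↔ l < c ∧ c < L := by
  rw [← mem_Ioo, ← hc.image_Ioi_eq_Ioo_of_strictMonoOn hf hl hL]
  refine ⟨fun ⟨x, hx, _⟩ ↦ ⟨x, hx⟩, fun ⟨x, hx, hfx⟩ ↦ ⟨x, ⟨hx, hfx⟩, ?_⟩⟩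
  rintro y ⟨hy, hfy⟩
  exact hf.injOn hy hx (hfy.trans hfx.symm)

end ImageOfIoi

noncomputable def rate (a k b : ℝ) : ℝ := b * log (1 + a / (k * b + a))

section Rate

variable {a k b : ℝ}

theorem hasDerivAt_rate (ha : 0 < a) (hb : 0 < k * b + a) :
    HasDerivAt (rate a k)
      (log (1 + a / (k * b + a)) - k * b * a / ((k * b + a) * (k * b + 2 * a))) b := by
  have hden : HasDerivAt (fun x ↦ k * x + a) k b := by
    simpa using ((hasDerivAt_id b).const_mul k).add_const a
  have harg : 0 < 1 + a / (k * b + a) := by positivity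
  have hlog := (((hasDerivAt_const b a).div hden hb.ne').const_add 1).log harg.ne'
  refine ((hasDerivAt_id b).mul hlog).congr_deriv ?_
  have hb₂ : 0 < k * b + 2 * a := by linarith
  simp only [Pi.div_apply, id_eq]
  generalize log (1 + a / (k * b + a)) = L
  rw [show 1 + a / (k * b + a) = (k * b + 2 * a) / (k * b + a) by field_simp; ring]
  field_simp
  ring

theorem rate_deriv_pos (ha : 0 < a) (hk : 0 < k) (hb : 0 < b) :
    0 < log (1 + a / (k * b + a)) - k * b * a / ((k * b + a) * (k * b + 2 * a)) := by
  have hkb : 0 < k * b := mul_pos hk hb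
  have hy : 0 < a / (k * b + a) := by positivity
  refine sub_pos.2 ?_
  calc k * b * a / ((k * b + a) * (k * b + 2 * a)) < 2 * a / (2 * k * b + 3 * a) := by
        rw [div_lt_div_iff₀ (by positivity) (by positivity)]
        nlinarith [mul_pos (mul_pos hkb ha) ha, pow_pos ha 3]
    _ = 2 * (a / (k * b + a)) / (a / (k * b + a) + 2) := by field_simp; ring
    _ < log (1 + a / (k * b + a)) := lt_log_one_add_of_pos hy

theorem continuousOn_rate (ha : 0 < a) (hk : 0 ≤ k) : ContinuousOn (rate a k) (Ici 0) :=
  fun b (hb : 0 ≤ b) ↦ (hasDerivAt_rate ha (by positivity)).continuousAt.continuousWithinAt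

theorem strictMonoOn_rate (ha : 0 < a) (hk : 0 < k) : StrictMonoOn (rate a k) (Ici 0) := by
  refine strictMonoOn_of_deriv_pos (convex_Ici 0) (continuousOn_rate ha hk.le) fun b hb ↦ ?_
  rw [interior_Ici, mem_Ioi] at hb
  rw [(hasDerivAt_rate ha (by positivity)).deriv]
  exact rate_deriv_pos ha hk hb

theorem tendsto_rate_nhdsGT_zero (ha : 0 < a) (hk : 0 ≤ k) :
    Tendsto (rate a k) (𝓝[>] 0) (𝓝 0) := by
  have := ((continuousOn_rate ha hk).continuousWithinAt self_mem_Ici).mono Ioi_subset_Ici_self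
  simpa [rate] using this.tendsto

theorem tendsto_rate_atTop (ha : 0 < a) (hk : 0 < k) :
    Tendsto (rate a k) atTop (𝓝 (a / k)) := by
  refine tendsto_mul_log_one_add_of_tendsto ?_
  have hlim : Tendsto (fun b : ℝ ↦ a / (k + a * b⁻¹)) atTop (𝓝 (a / (k + a * 0))) :=
    tendsto_const_nhds.div (tendsto_const_nhds.add (tendsto_inv_atTop_zero.const_mul a))
      (by simp [hk.ne'])
  rw [mul_zero, add_zero] at hlim
  refine hlim.congr' ?_
  filter_upwards [eventually_gt_atTop 0] with b hb
  field_simp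

end Rate

/-- For any real `c`, the equation `F(b) = c` has exactly one solution
`b ∈ (0, ∞)` if and only if `0 < c < h·p / (2·N₀·ln 2)`. -/
theorem stmt_7 (h p N₀ : ℝ) (hh : 0 < h) (hp : 0 < p) (hN : 0 < N₀)
    (F : ℝ → ℝ)
    (hF : ∀ b : ℝ, F b = b * Real.logb 2 (1 + h * p / (2 * N₀ * b + h * p)))
    (c : ℝ) :
    (∃! b : ℝ, 0 < b ∧ F b = c) ↔ (0 < c ∧ c < h * p / (2 * N₀ * Real.log 2)) := by
  have ha : 0 < h * p := mul_pos hh hp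
  have hk : 0 < 2 * N₀ := by positivity
  have hlog2 : 0 < log 2 := log_pos one_lt_two
  have hF_rate : F = fun b ↦ rate (h * p) (2 * N₀) b / log 2 :=
    funext fun b ↦ by rw [hF, logb, rate, mul_div_assoc']
  have hmono : StrictMonoOn F (Ioi 0) := fun x hx y hy hxy ↦ by
    rw [hF_rate]
    exact div_lt_div_of_pos_right
      (strictMonoOn_rate ha hk (Ioi_subset_Ici_self hx) (Ioi_subset_Ici_self hy) hxy) hlog2
  have hcont : ContinuousOn F (Ioi 0) := by
    rw [hF_rate]
    exact ((continuousOn_rate ha hk.le).mono Ioi_subset_Ici_self).div_const _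
  have hzero : Tendsto F (𝓝[>] 0) (𝓝 0) := by
    simpa only [hF_rate, zero_div] using (tendsto_rate_nhdsGT_zero ha hk.le).div_const (log 2)
  have htop : Tendsto F atTop (𝓝 (h * p / (2 * N₀ * log 2))) := by
    simpa only [hF_rate, div_div] using (tendsto_rate_atTop ha hk).div_const (log 2)
  exact hcont.existsUnique_eq_iff_of_strictMonoOn hmono hzero htop c
end

section
/- The transmission-time function t(b) = Q / F(b) is strictly decreasing on the positive reals: for all 0 < b₁ < b₂, Q / F(b₁) > Q / F(b₂). -/
/-!
With `a = 2 N₀`, `c = h p` and `y = a b / c`, the rate `F b` is the positive multiple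
`c / (a log 2)` of `y log (1 + 1 / (y + 1))`. The derivative of the latter,
`log (1 + 1 / (y + 1)) - y / ((y + 1) (y + 2))`, is positive because `log x > 1 - 1 / x` for
`x > 1`. So `F` is strictly increasing on `[0, ∞)` with `F 0 = 0`; in particular `0 < F b₁ < F b₂`,
and `Q / F` decreases.
-/

open Real Set

lemma one_sub_inv_lt_log {x : ℝ} (hx : 1 < x) : 1 - x⁻¹ < log x := by
  have h := log_lt_sub_one_of_pos (inv_pos.2 (zero_lt_one.trans hx)) (inv_ne_one.2 hx.ne')
  rw [log_inv] at h
  linarith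

lemma hasDerivAt_mul_log_one_add_inv_add_one {y : ℝ} (hy : 0 ≤ y) :
    HasDerivAt (fun y => y * log (1 + (y + 1)⁻¹))
      (log (1 + (y + 1)⁻¹) - y / ((y + 1) * (y + 2))) y := by
  have hy₁ : y + 1 ≠ 0 := by positivity
  have hinv : HasDerivAt (fun y => 1 + (y + 1)⁻¹) (-1 / (y + 1) ^ 2) y := by
    simpa using ((hasDerivAt_id y).add_const 1).inv hy₁ |>.const_add 1
  have hlog := hinv.log (by positivity)
  refine ((hasDerivAt_id' y).mul hlog).congr_deriv ?_
  field_simp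
  ring

lemma strictMonoOn_mul_log_one_add_inv_add_one :
    StrictMonoOn (fun y => y * log (1 + (y + 1)⁻¹)) (Ici 0) := by
  refine strictMonoOn_of_hasDerivWithinAt_pos (convex_Ici 0)
    (fun y hy => (hasDerivAt_mul_log_one_add_inv_add_one hy).continuousAt.continuousWithinAt)
    (fun y hy => (hasDerivAt_mul_log_one_add_inv_add_one (interior_subset hy)).hasDerivWithinAt)
    fun y hy => ?_
  rw [interior_Ici, mem_Ioi] at hy
  have hlog := one_sub_inv_lt_log (lt_add_of_pos_right 1 (inv_pos.2 (by positivity : 0 < y + 1)))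
  have hbound : y / ((y + 1) * (y + 2)) < 1 - (1 + (y + 1)⁻¹)⁻¹ := by
    rw [div_lt_iff₀ (by positivity)]
    field_simp
    nlinarith
  linarith

lemma mul_logb_one_add_div_eq {a c : ℝ} (ha : a ≠ 0) (hc : c ≠ 0) (B b : ℝ) :
    b * logb B (1 + c / (a * b + c)) =
      c / (a * log B) * (a * b / c * log (1 + (a * b / c + 1)⁻¹)) := by
  rw [div_add_one hc, inv_div, logb]
  field_simp

lemma strictMonoOn_mul_logb_one_add_div {a c B : ℝ} (ha : 0 < a) (hc : 0 < c) (hB : 1 < B) :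
    StrictMonoOn (fun b => b * logb B (1 + c / (a * b + c))) (Ici 0) := by
  intro x hx y hy hxy
  have hlogB : 0 < log B := log_pos hB
  simp only [mul_logb_one_add_div_eq ha.ne' hc.ne']
  refine mul_lt_mul_of_pos_left
    (strictMonoOn_mul_log_one_add_inv_add_one ?_ ?_ (by gcongr)) (by positivity)
  · exact div_nonneg (mul_nonneg ha.le hx) hc.le
  · exact div_nonneg (mul_nonneg ha.le hy) hc.le

/-- The transmission-time function `t(b) = Q / F(b)` is strictly decreasing
on the positive reals: for all `0 < b₁ < b₂`, `Q / F(b₁) > Q / F(b₂)`. -/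
theorem stmt_10 (h p N₀ Q : ℝ) (hh : 0 < h) (hp : 0 < p) (hN : 0 < N₀) (hQ : 0 < Q)
    (F : ℝ → ℝ)
    (hF : ∀ b : ℝ, F b = b * Real.logb 2 (1 + h * p / (2 * N₀ * b + h * p)))
    (b₁ b₂ : ℝ) (hb₁ : 0 < b₁) (hb : b₁ < b₂) :
    Q / F b₁ > Q / F b₂ := by
  obtain rfl : F = fun b => b * logb 2 (1 + h * p / (2 * N₀ * b + h * p)) := funext hF
  have hmono := strictMonoOn_mul_logb_one_add_div (by positivity : 0 < 2 * N₀)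
    (by positivity : 0 < h * p) one_lt_two
  have hpos : 0 < b₁ * logb 2 (1 + h * p / (2 * N₀ * b₁ + h * p)) := by
    simpa using hmono self_mem_Ici hb₁.le hb₁
  exact div_lt_div_of_pos_left hQ hpos (hmono hb₁.le (hb₁.trans hb).le hb)
end

section
/- The transmission-time function t(b) = Q / F(b) is strictly convex on the positive reals: for all b₁, b₂ > 0 with b₁ ≠ b₂ and every s ∈ (0,1), Q / F(s·b₁ + (1−s)·b₂) < s·(Q / F(b₁)) + (1−s)·(Q / F(b₂)). -/
/-!
With `A = 2 N₀` and `C = h p` the rate is `F b = g b / log 2`, where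
`g b = b (log (A b + 2C) - log (A b + C))`. A direct computation gives
`g'' b = -A C² (3 A b + 4 C) / ((A b + C) (A b + 2 C))² < 0`, so `g` is strictly concave and
positive on `(0, ∞)`. The reciprocal of a positive strictly concave function is strictly
convex, since `t ↦ 1 / t` is convex and decreasing on `(0, ∞)`.
-/

open Real Set

theorem strictConcaveOn_of_hasDerivAt2_neg {D : Set ℝ} (hD : Convex ℝ D) (hDo : IsOpen D)
    {f f' f'' : ℝ → ℝ} (hf : ∀ x ∈ D, HasDerivAt f (f' x) x)
    (hf' : ∀ x ∈ D, HasDerivAt f' (f'' x) x) (hf'' : ∀ x ∈ D, f'' x < 0) :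
    StrictConcaveOn ℝ D f := by
  have hanti : StrictAntiOn f' D :=
    strictAntiOn_of_hasDerivWithinAt_neg hD
      (fun x hx => (hf' x hx).continuousAt.continuousWithinAt)
      (by rw [hDo.interior_eq]; exact fun x hx => (hf' x hx).hasDerivWithinAt)
      (by rwa [hDo.interior_eq])
  refine StrictAntiOn.strictConcaveOn_of_deriv hD
    (fun x hx => (hf x hx).continuousAt.continuousWithinAt) ?_
  rw [hDo.interior_eq]
  intro x hx y hy hxy
  rw [(hf x hx).deriv, (hf y hy).deriv]
  exact hanti hx hy hxy

theorem StrictConcaveOn.strictConvexOn_div {E : Type*} [AddCommMonoid E] [Module ℝ E]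
    {s : Set E} {f : E → ℝ} {c : ℝ} (hc : 0 < c) (hf : StrictConcaveOn ℝ s f)
    (hpos : ∀ x ∈ s, 0 < f x) : StrictConvexOn ℝ s fun x => c / f x := by
  refine ⟨hf.1, fun x hx y hy hxy a b ha hb hab => ?_⟩
  have hmean : 0 < a * f x + b * f y :=
    add_pos (mul_pos ha (hpos x hx)) (mul_pos hb (hpos y hy))
  have hinv := (convexOn_zpow (𝕜 := ℝ) (-1)).2 (mem_Ioi.2 (hpos x hx)) (mem_Ioi.2 (hpos y hy))
    ha.le hb.le hab
  simp only [zpow_neg_one, smul_eq_mul] at hinv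
  calc c / f (a • x + b • y) < c / (a * f x + b * f y) :=
        div_lt_div_of_pos_left hc hmean (hf.2 hx hy hxy ha hb hab)
    _ ≤ a * (c / f x) + b * (c / f y) := by
        simp only [div_eq_mul_inv]
        nlinarith [mul_le_mul_of_nonneg_left hinv hc.le]

section RateGap

variable {A C : ℝ}

theorem hasDerivAt_mul_log_sub_log (hA : 0 < A) (hC : 0 < C) {x : ℝ} (hx : 0 < x) :
    HasDerivAt (fun b => b * (log (A * b + 2 * C) - log (A * b + C)))
      (log (A * x + 2 * C) - log (A * x + C) - A * C * x / ((A * x + C) * (A * x + 2 * C))) x := by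
  have hu : 0 < A * x + C := by positivity
  have hw : 0 < A * x + 2 * C := by positivity
  have hlin : ∀ c, HasDerivAt (fun b => A * b + c) A x := fun c => by
    simpa using ((hasDerivAt_id x).const_mul A).add_const c
  refine ((hasDerivAt_id' x).mul (((hlin _).log hw.ne').sub ((hlin _).log hu.ne'))).congr_deriv ?_
  simp only [Pi.sub_apply]
  field_simp
  ring

theorem hasDerivAt_log_sub_log_sub_div (hA : 0 < A) (hC : 0 < C) {x : ℝ} (hx : 0 < x) :
    HasDerivAt
      (fun b => log (A * b + 2 * C) - log (A * b + C) - A * C * b / ((A * b + C) * (A * b + 2 * C)))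
      (-(A * C ^ 2 * (3 * A * x + 4 * C)) / ((A * x + C) * (A * x + 2 * C)) ^ 2) x := by
  have hu : 0 < A * x + C := by positivity
  have hw : 0 < A * x + 2 * C := by positivity
  have hlin : ∀ c, HasDerivAt (fun b => A * b + c) A x := fun c => by
    simpa using ((hasDerivAt_id x).const_mul A).add_const c
  have hprod : HasDerivAt (fun b => (A * b + C) * (A * b + 2 * C))
      (A * (A * x + 2 * C) + (A * x + C) * A) x := (hlin C).mul (hlin (2 * C))
  refine ((((hlin _).log hw.ne').sub ((hlin _).log hu.ne')).sub
    (((hasDerivAt_id' x).const_mul (A * C)).div hprod (mul_pos hu hw).ne')).congr_deriv ?_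
  field_simp
  ring

theorem strictConcaveOn_mul_log_sub_log (hA : 0 < A) (hC : 0 < C) :
    StrictConcaveOn ℝ (Ioi 0) fun b => b * (log (A * b + 2 * C) - log (A * b + C)) :=
  strictConcaveOn_of_hasDerivAt2_neg (convex_Ioi 0) isOpen_Ioi
    (fun _ hx => hasDerivAt_mul_log_sub_log hA hC hx)
    (fun _ hx => hasDerivAt_log_sub_log_sub_div hA hC hx)
    (fun x hx => by
      have hx : 0 < x := hx
      have : 0 < A * C ^ 2 * (3 * A * x + 4 * C) := by positivity
      exact div_neg_of_neg_of_pos (neg_neg_of_pos this) (by positivity))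

theorem mul_log_sub_log_pos (hA : 0 < A) (hC : 0 < C) {b : ℝ} (hb : 0 < b) :
    0 < b * (log (A * b + 2 * C) - log (A * b + C)) :=
  mul_pos hb (sub_pos.2 (log_lt_log (by positivity) (by linarith)))

theorem mul_logb_one_add_div_eq_s11 (hA : 0 < A) (hC : 0 < C) {b : ℝ} (hb : 0 < b) :
    b * logb 2 (1 + C / (A * b + C)) = b * (log (A * b + 2 * C) - log (A * b + C)) / log 2 := by
  have hu : 0 < A * b + C := by positivity
  have hw : 0 < A * b + 2 * C := by positivity
  have hratio : 1 + C / (A * b + C) = (A * b + 2 * C) / (A * b + C) := by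
    field_simp
    ring
  rw [hratio, logb, log_div hw.ne' hu.ne', mul_div_assoc]

end RateGap

/-- The transmission-time function `t(b) = Q / F(b)` is strictly convex on
the positive reals: for all `b₁, b₂ > 0` with `b₁ ≠ b₂` and every `s ∈ (0,1)`,
`Q / F(s·b₁ + (1−s)·b₂) < s·(Q / F(b₁)) + (1−s)·(Q / F(b₂))`. -/
theorem stmt_11 (h p N₀ Q : ℝ) (hh : 0 < h) (hp : 0 < p) (hN : 0 < N₀) (hQ : 0 < Q)
    (F : ℝ → ℝ)
    (hF : ∀ b : ℝ, F b = b * Real.logb 2 (1 + h * p / (2 * N₀ * b + h * p)))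
    (b₁ b₂ : ℝ) (hb₁ : 0 < b₁) (hb₂ : 0 < b₂) (hne : b₁ ≠ b₂)
    (s : ℝ) (hs0 : 0 < s) (hs1 : s < 1) :
    Q / F (s * b₁ + (1 - s) * b₂) < s * (Q / F b₁) + (1 - s) * (Q / F b₂) := by
  have hA : 0 < 2 * N₀ := by positivity
  have hC : 0 < h * p := by positivity
  have hconvex := (strictConcaveOn_mul_log_sub_log hA hC).strictConvexOn_div
    (mul_pos hQ (log_pos one_lt_two)) (fun _ hb => mul_log_sub_log_pos hA hC hb)
  have hQF : EqOn (fun b => Q * log 2 / (b * (log (2 * N₀ * b + 2 * (h * p)) -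
      log (2 * N₀ * b + h * p)))) (fun b => Q / F b) (Ioi 0) := fun b hb => by
    simp only [hF, mul_logb_one_add_div_eq_s11 hA hC hb, div_div_eq_mul_div]
  simpa only [smul_eq_mul] using
    (hconvex.congr hQF).2 hb₁ hb₂ hne hs0 (sub_pos.2 hs1) (add_sub_cancel s 1)
end

section
/- The pairwise transmission-time function ξ(b) = max(Q / F_i(b), Q / F_j(b)) is convex and strictly decreasing on the positive reals: for all 0 < b₁ < b₂, ξ(b₁) > ξ(b₂), and for all b₁, b₂ > 0 and s ∈ [0,1], ξ(s·b₁ + (1−s)·b₂) ≤ s·ξ(b₁) + (1−s)·ξ(b₂). -/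
/-!
With `a = 2N₀` and `c = h_u p`, `F_u(b) log 2 = b log (1 + c / (a b + c))`. This function of `b`
is positive, strictly increasing (its derivative is bounded below via `log y ≥ 1 - 1/y`) and
concave (its second derivative is `-a c² (3ab + 4c) / ((ab + c)² (ab + 2c)²)`). Since
`x ↦ Q / x` is decreasing and convex on `(0, ∞)`, each `Q / F_u` is strictly decreasing and
convex, and both properties pass to the pointwise maximum.
-/

open Real Set

section

variable {𝕜 : Type*} [Field 𝕜] [LinearOrder 𝕜] [IsStrictOrderedRing 𝕜]

theorem StrictMonoOn.const_div {α : Type*} [Preorder α] {f : α → 𝕜} {s : Set α}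
    (hf : StrictMonoOn f s) (hpos : ∀ x ∈ s, 0 < f x) {Q : 𝕜} (hQ : 0 < Q) :
    StrictAntiOn (fun x => Q / f x) s :=
  fun _ hx _ hy hxy => div_lt_div_of_pos_left hQ (hpos _ hx) (hf hx hy hxy)

theorem ConcaveOn.convexOn_const_div {E : Type*} [AddCommMonoid E] [Module 𝕜 E] {f : E → 𝕜}
    {s : Set E} (hf : ConcaveOn 𝕜 s f) (hpos : ∀ x ∈ s, 0 < f x) {Q : 𝕜} (hQ : 0 ≤ Q) :
    ConvexOn 𝕜 s (fun x => Q / f x) := by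
  refine ⟨hf.1, fun x hx y hy a b ha hb hab => ?_⟩
  have hmix : 0 < a * f x + b * f y := by
    simpa using (convex_Ioi 0) (hpos x hx) (hpos y hy) ha hb hab
  have hinv := (convexOn_zpow (𝕜 := 𝕜) (-1)).2 (mem_Ioi.2 (hpos x hx)) (mem_Ioi.2 (hpos y hy))
    ha hb hab
  simp only [zpow_neg_one, smul_eq_mul] at hinv ⊢
  calc Q / f (a • x + b • y) ≤ Q / (a * f x + b * f y) :=
        div_le_div_of_nonneg_left hQ hmix (by simpa using hf.2 hx hy ha hb hab)
    _ = Q * (a * f x + b * f y)⁻¹ := div_eq_mul_inv _ _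
    _ ≤ Q * (a * (f x)⁻¹ + b * (f y)⁻¹) := mul_le_mul_of_nonneg_left hinv hQ
    _ = a * (Q / f x) + b * (Q / f y) := by ring

end

theorem StrictAntiOn.sup {α β : Type*} [Preorder α] [LinearOrder β] {f g : α → β}
    {s : Set α} (hf : StrictAntiOn f s) (hg : StrictAntiOn g s) : StrictAntiOn (f ⊔ g) s :=
  fun _ hx _ hy hxy => max_lt_max (hf hx hy hxy) (hg hx hy hxy)

noncomputable def shannonRate (a c b : ℝ) : ℝ := b * log (1 + c / (a * b + c))

noncomputable def shannonRateDeriv (a c b : ℝ) : ℝ :=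
  log (1 + c / (a * b + c)) - a * b * c / ((a * b + c) * (a * b + 2 * c))

section

variable {a c b : ℝ}

lemma hasDerivAt_log_one_add_div (ha : 0 ≤ a) (hc : 0 < c) (hb : 0 < b) :
    HasDerivAt (fun x => log (1 + c / (a * x + c)))
      (-(a * c) / ((a * b + c) * (a * b + 2 * c))) b := by
  have h₁ : 0 < a * b + c := by positivity
  have hlin : HasDerivAt (fun x => a * x + c) a b := by
    simpa using ((hasDerivAt_id b).const_mul a).add_const c
  have hpos : 1 + c / (a * b + c) ≠ 0 := by positivity
  have hu := (((hasDerivAt_const b c).div hlin h₁.ne').const_add 1).log hpos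
  refine hu.congr_deriv ?_
  simp only [Pi.div_apply]
  field_simp
  ring

lemma hasDerivAt_shannonRate (ha : 0 ≤ a) (hc : 0 < c) (hb : 0 < b) :
    HasDerivAt (shannonRate a c) (shannonRateDeriv a c b) b := by
  refine ((hasDerivAt_id b).mul (hasDerivAt_log_one_add_div ha hc hb)).congr_deriv ?_
  unfold shannonRateDeriv
  simp only [id]
  field_simp
  ring

lemma hasDerivAt_shannonRateDeriv (ha : 0 ≤ a) (hc : 0 < c) (hb : 0 < b) :
    HasDerivAt (shannonRateDeriv a c)
      (-(a * c ^ 2 * (3 * a * b + 4 * c)) / ((a * b + c) ^ 2 * (a * b + 2 * c) ^ 2)) b := by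
  have h₁ : 0 < a * b + c := by positivity
  have h₂ : 0 < a * b + 2 * c := by positivity
  have hlin : HasDerivAt (fun x => a * x + c) a b := by
    simpa using ((hasDerivAt_id b).const_mul a).add_const c
  have hlin₂ : HasDerivAt (fun x => a * x + 2 * c) a b := by
    simpa using ((hasDerivAt_id b).const_mul a).add_const (2 * c)
  have hq := (((hasDerivAt_id b).const_mul a).mul_const c).div (hlin.mul hlin₂)
    (mul_pos h₁ h₂).ne'
  refine ((hasDerivAt_log_one_add_div ha hc hb).sub hq).congr_deriv ?_
  simp only [id, Pi.mul_apply]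
  field_simp
  ring

lemma shannonRateDeriv_pos (ha : 0 ≤ a) (hc : 0 < c) (hb : 0 < b) :
    0 < shannonRateDeriv a c b := by
  have hlog := one_sub_inv_le_log_of_pos (x := 1 + c / (a * b + c)) (by positivity)
  have hgap : 1 - (1 + c / (a * b + c))⁻¹ - a * b * c / ((a * b + c) * (a * b + 2 * c))
      = c ^ 2 / ((a * b + c) * (a * b + 2 * c)) := by
    field_simp
    ring
  have : 0 < c ^ 2 / ((a * b + c) * (a * b + 2 * c)) := by positivity
  unfold shannonRateDeriv
  linarith

lemma shannonRate_pos (ha : 0 ≤ a) (hc : 0 < c) (hb : 0 < b) : 0 < shannonRate a c b :=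
  mul_pos hb (log_pos (lt_add_of_pos_right 1 (by positivity)))

lemma strictMonoOn_shannonRate (ha : 0 ≤ a) (hc : 0 < c) :
    StrictMonoOn (shannonRate a c) (Ioi 0) := by
  refine strictMonoOn_of_deriv_pos (convex_Ioi 0)
    (fun x hx => (hasDerivAt_shannonRate ha hc hx).continuousAt.continuousWithinAt) fun x hx => ?_
  rw [interior_Ioi] at hx
  rw [(hasDerivAt_shannonRate ha hc hx).deriv]
  exact shannonRateDeriv_pos ha hc hx

lemma concaveOn_shannonRate (ha : 0 ≤ a) (hc : 0 < c) :
    ConcaveOn ℝ (Ioi 0) (shannonRate a c) := by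
  refine concaveOn_of_hasDerivWithinAt2_nonpos (convex_Ioi 0) (f' := shannonRateDeriv a c)
    (f'' := fun x => -(a * c ^ 2 * (3 * a * x + 4 * c)) / ((a * x + c) ^ 2 * (a * x + 2 * c) ^ 2))
    (fun x hx => (hasDerivAt_shannonRate ha hc hx).continuousAt.continuousWithinAt)
    ?_ ?_ ?_ <;> simp only [interior_Ioi, mem_Ioi] <;> intro x hx
  · exact (hasDerivAt_shannonRate ha hc hx).hasDerivWithinAt
  · exact (hasDerivAt_shannonRateDeriv ha hc hx).hasDerivWithinAt
  · exact div_nonpos_of_nonpos_of_nonneg (neg_nonpos.2 (by positivity)) (by positivity)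

lemma strictAntiOn_div_shannonRate {Q : ℝ} (hQ : 0 < Q) (ha : 0 ≤ a) (hc : 0 < c) :
    StrictAntiOn (fun b => Q / shannonRate a c b) (Ioi 0) :=
  (strictMonoOn_shannonRate ha hc).const_div (fun _ hb => shannonRate_pos ha hc hb) hQ

lemma convexOn_div_shannonRate {Q : ℝ} (hQ : 0 ≤ Q) (ha : 0 ≤ a) (hc : 0 < c) :
    ConvexOn ℝ (Ioi 0) (fun b => Q / shannonRate a c b) :=
  (concaveOn_shannonRate ha hc).convexOn_const_div (fun _ hb => shannonRate_pos ha hc hb) hQ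

end

/-- The pairwise transmission-time function
`ξ(b) = max(Q / F_i(b), Q / F_j(b))` is convex and strictly decreasing on the positive
reals: for all `0 < b₁ < b₂`, `ξ(b₁) > ξ(b₂)`, and for all `b₁, b₂ > 0` and `s ∈ [0,1]`,
`ξ(s·b₁ + (1−s)·b₂) ≤ s·ξ(b₁) + (1−s)·ξ(b₂)`. -/
theorem stmt_12 (p N₀ Q hi hj : ℝ) (hp : 0 < p) (hN : 0 < N₀) (hQ : 0 < Q)
    (hhi : 0 < hi) (hhj : 0 < hj)
    (Fi Fj ξ : ℝ → ℝ)
    (hFi : ∀ b : ℝ, Fi b = b * Real.logb 2 (1 + hi * p / (2 * N₀ * b + hi * p)))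
    (hFj : ∀ b : ℝ, Fj b = b * Real.logb 2 (1 + hj * p / (2 * N₀ * b + hj * p)))
    (hξ : ∀ b : ℝ, ξ b = max (Q / Fi b) (Q / Fj b)) :
    (∀ b₁ b₂ : ℝ, 0 < b₁ → b₁ < b₂ → ξ b₁ > ξ b₂) ∧
    (∀ b₁ b₂ : ℝ, 0 < b₁ → 0 < b₂ → ∀ s : ℝ, 0 ≤ s → s ≤ 1 →
      ξ (s * b₁ + (1 - s) * b₂) ≤ s * ξ b₁ + (1 - s) * ξ b₂) := by
  have ha : 0 ≤ 2 * N₀ := by positivity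
  have hci : 0 < hi * p := by positivity
  have hcj : 0 < hj * p := by positivity
  have hQ' : 0 < Q * log 2 := mul_pos hQ (log_pos one_lt_two)
  have hξ' : ξ = (fun b => Q * log 2 / shannonRate (2 * N₀) (hi * p) b) ⊔
      (fun b => Q * log 2 / shannonRate (2 * N₀) (hj * p) b) := by
    funext b
    simp only [hξ, hFi, hFj, Pi.sup_apply, shannonRate, logb, ← mul_div_assoc,
      div_div_eq_mul_div]
  have hanti : StrictAntiOn ξ (Ioi 0) := hξ' ▸
    (strictAntiOn_div_shannonRate hQ' ha hci).sup (strictAntiOn_div_shannonRate hQ' ha hcj)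
  have hconv : ConvexOn ℝ (Ioi 0) ξ := hξ' ▸
    (convexOn_div_shannonRate hQ'.le ha hci).sup (convexOn_div_shannonRate hQ'.le ha hcj)
  refine ⟨fun b₁ b₂ hb₁ hlt => hanti hb₁ (hb₁.trans hlt) hlt,
    fun b₁ b₂ hb₁ hb₂ s hs hs₁ => ?_⟩
  simpa using hconv.2 hb₁ hb₂ hs (sub_nonneg.2 hs₁) (by ring)
end

section
/- Let c be a real number with 0 < c < h_u·p/(2·N₀·ln 2) for both u ∈ {i, j}, and for each u let b_u > 0 be the unique positive solution of F_u(b_u) = c. Then for every b > 0, the two inequalities F_i(b) ≥ c and F_j(b) ≥ c hold simultaneously if and only if b ≥ max(b_i, b_j); that is, the joint latency constraint of the user pair is equivalent to the single bandwidth lower bound max(b_i, b_j). -/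
/-!
After the substitution `t = 2 N₀ b / (h p)`, `F(b)` is a positive multiple of
`t · log ((t + 2) / (t + 1))`, whose derivative `log ((t + 2) / (t + 1)) - t / ((t + 1) (t + 2))`
is positive by `log y > 1 - 1 / y`. So each `F_u` is strictly increasing on `(0, ∞)`, and
`F_u(b) ≥ c = F_u(b_u)` just says `b ≥ b_u`.
-/

open Real Set

theorem strictMonoOn_mul_log_add_two_div_add_one :
    StrictMonoOn (fun t : ℝ => t * log ((t + 2) / (t + 1))) (Ioi (-1)) := by
  apply strictMonoOn_of_deriv_pos (convex_Ioi (-1))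
  · refine continuousOn_id.mul (ContinuousOn.log ?_ fun t (ht : -1 < t) => ?_)
    · exact ContinuousOn.div (by fun_prop) (by fun_prop) fun t (ht : -1 < t) => by linarith
    · exact (div_pos (by linarith) (by linarith)).ne'
  · intro t ht
    rw [interior_Ioi] at ht
    have h1 : 0 < t + 1 := by linarith [mem_Ioi.mp ht]
    have h2 : 0 < t + 2 := by linarith
    have hderiv : HasDerivAt (fun t : ℝ => t * log ((t + 2) / (t + 1)))
        (log ((t + 2) / (t + 1)) - t / ((t + 1) * (t + 2))) t := by
      have hq := ((hasDerivAt_id' t).add_const 2).fun_div ((hasDerivAt_id' t).add_const 1) h1.ne'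
      refine ((hasDerivAt_id' t).fun_mul (hq.log (div_pos h2 h1).ne')).congr_deriv ?_
      field_simp; ring
    rw [hderiv.deriv]
    have hlog : 1 / (t + 2) < log ((t + 2) / (t + 1)) := by
      have hne : (t + 1) / (t + 2) ≠ 1 := by
        rw [Ne, div_eq_one_iff_eq h2.ne']; linarith
      have hlt := log_lt_sub_one_of_pos (div_pos h1 h2) hne
      have hflip : log ((t + 1) / (t + 2)) = -log ((t + 2) / (t + 1)) := by
        rw [← log_inv, inv_div]
      have hsub : (t + 1) / (t + 2) - 1 = -(1 / (t + 2)) := by field_simp; ring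
      linarith
    have hgap : 1 / (t + 2) - t / ((t + 1) * (t + 2)) = 1 / ((t + 1) * (t + 2)) := by
      field_simp; ring
    have : 0 < 1 / ((t + 1) * (t + 2)) := by positivity
    linarith

theorem strictMonoOn_mul_logb_one_add_div_s16 {A k : ℝ} (hA : 0 < A) (hk : 0 < k) :
    StrictMonoOn (fun b : ℝ => b * logb 2 (1 + A / (k * b + A))) (Ioi 0) := by
  have hrescale : ∀ b > 0, b * logb 2 (1 + A / (k * b + A)) =
      A / (k * log 2) * ((k * b / A) * log ((k * b / A + 2) / (k * b / A + 1))) := by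
    intro b hb
    have hArg : (k * b / A + 2) / (k * b / A + 1) = 1 + A / (k * b + A) := by
      field_simp; ring
    rw [hArg, logb]
    field_simp
  intro x hx y hy hxy
  dsimp only
  rw [hrescale x hx, hrescale y hy]
  have hpos : ∀ {b : ℝ}, b ∈ Ioi (0 : ℝ) → k * b / A ∈ Ioi (-1) := by
    intro b (hb : 0 < b)
    have : 0 < k * b / A := by positivity
    exact mem_Ioi.mpr (by linarith)
  have hlog2 : 0 < log 2 := log_pos one_lt_two
  exact mul_lt_mul_of_pos_left
    (strictMonoOn_mul_log_add_two_div_add_one (hpos hx) (hpos hy) (by gcongr))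
    (by positivity)

theorem stmt_16_general (p N₀ hi hj : ℝ) (hp : 0 < p) (hN : 0 < N₀) (hhi : 0 < hi) (hhj : 0 < hj)
    (Fi Fj : ℝ → ℝ)
    (hFi : ∀ b : ℝ, Fi b = b * Real.logb 2 (1 + hi * p / (2 * N₀ * b + hi * p)))
    (hFj : ∀ b : ℝ, Fj b = b * Real.logb 2 (1 + hj * p / (2 * N₀ * b + hj * p)))
    (c : ℝ)
    (bi bj : ℝ) (hbi : 0 < bi) (hbj : 0 < bj)
    (hFbi : Fi bi = c) (hFbj : Fj bj = c)
    (b : ℝ) (hb : 0 < b) :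
    (Fi b ≥ c ∧ Fj b ≥ c) ↔ b ≥ max bi bj := by
  have hmono_i : StrictMonoOn Fi (Ioi 0) := by
    rw [funext hFi]; exact strictMonoOn_mul_logb_one_add_div_s16 (by positivity) (by positivity)
  have hmono_j : StrictMonoOn Fj (Ioi 0) := by
    rw [funext hFj]; exact strictMonoOn_mul_logb_one_add_div_s16 (by positivity) (by positivity)
  have hi_iff : Fi b ≥ c ↔ b ≥ bi := hFbi ▸ hmono_i.le_iff_le hbi hb
  have hj_iff : Fj b ≥ c ↔ b ≥ bj := hFbj ▸ hmono_j.le_iff_le hbj hb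
  simp only [hi_iff, hj_iff, ge_iff_le, max_le_iff]

/-- Let `0 < c < h_u·p/(2·N₀·ln 2)` for both users `u ∈ {i,j}`, and for
each `u` let `b_u > 0` be the unique positive solution of `F_u(b_u) = c`. Then for every
`b > 0`, the inequalities `F_i(b) ≥ c` and `F_j(b) ≥ c` hold simultaneously iff
`b ≥ max(b_i, b_j)`. -/
theorem stmt_16 (p N₀ hi hj : ℝ) (hp : 0 < p) (hN : 0 < N₀) (hhi : 0 < hi) (hhj : 0 < hj)
    (Fi Fj : ℝ → ℝ)
    (hFi : ∀ b : ℝ, Fi b = b * Real.logb 2 (1 + hi * p / (2 * N₀ * b + hi * p)))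
    (hFj : ∀ b : ℝ, Fj b = b * Real.logb 2 (1 + hj * p / (2 * N₀ * b + hj * p)))
    (c : ℝ) (hc0 : 0 < c)
    (hci : c < hi * p / (2 * N₀ * Real.log 2)) (hcj : c < hj * p / (2 * N₀ * Real.log 2))
    (bi bj : ℝ) (hbi : 0 < bi) (hbj : 0 < bj)
    (hFbi : Fi bi = c) (hFbj : Fj bj = c)
    (b : ℝ) (hb : 0 < b) :
    (Fi b ≥ c ∧ Fj b ≥ c) ↔ b ≥ max bi bj :=
  stmt_16_general p N₀ hi hj hp hN hhi hhj Fi Fj hFi hFj c bi bj hbi hbj hFbi hFbj b hb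
end

section
/- For each group k ∈ {1, …, K}, let β_k(Θ) denote the unique positive solution of G_k(β) = Θ (which exists for every Θ > 0), and define S(Θ) = Σ_{k=1}^{K} max(L_k, β_k(Θ)). Then S is antitone in Θ on (0, ∞), and if Σ_{k=1}^{K} L_k < B, there exists a unique Θ* > 0 such that S(Θ*) = B. -/
/-!
Each `G_k` is positive and strictly decreasing on `(0, ∞)`: `F_k` is positive and increasing,
while `F_k′` is positive (by `log y ≥ 1 - 1/y`) and decreasing (its derivative is explicitly
negative). Hence `β_k`, a right inverse of `G_k`, is a strictly decreasing bijection of `(0, ∞)`,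
so it is continuous and every term `max (L_k, β_k)` of `S` is continuous and antitone.
For large `Θ` all `β_k(Θ) ≤ L_k`, so `S(Θ) = Σ L_k < B`, while at `Θ = G_k(B)` one term already
equals `B`; the intermediate value theorem gives `Θ*`. It is unique because whenever
`S(Θ) = B > Σ L_k`, some `β_k(Θ)` exceeds `L_k`, and that term is strictly decreasing.
-/

open Real Set

-- The paper's `F_k`, `F_k′`, `G_k` for a group with channel gain `h` and transmit power `p`.
noncomputable def rateF (h p N₀ b : ℝ) : ℝ :=
  b * logb 2 (1 + h * p / (2 * N₀ * b + h * p))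

noncomputable def rateF' (h p N₀ b : ℝ) : ℝ :=
  logb 2 ((2 * N₀ * b + 2 * h * p) / (2 * N₀ * b + h * p)) -
    (2 * N₀ * b * h * p) / (log 2 * (2 * N₀ * b + 2 * h * p) * (2 * N₀ * b + h * p))

noncomputable def rateG (h p N₀ Q b : ℝ) : ℝ :=
  p * Q * rateF' h p N₀ b / rateF h p N₀ b ^ 2

section Calculus

variable {h p N₀ Q b : ℝ}

lemma hasDerivAt_logb_rateRatio (hh : 0 < h) (hp : 0 < p) (hN : 0 < N₀) (hb : 0 < b) :
    HasDerivAt (fun x => logb 2 ((2 * N₀ * x + 2 * h * p) / (2 * N₀ * x + h * p)))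
      (-(2 * N₀ * h * p) / (log 2 * (2 * N₀ * b + 2 * h * p) * (2 * N₀ * b + h * p))) b := by
  have hu : 0 < 2 * N₀ * b + h * p := by positivity
  have hv : 0 < 2 * N₀ * b + 2 * h * p := by positivity
  have hlin (c : ℝ) : HasDerivAt (fun x => 2 * N₀ * x + c) (2 * N₀) b := by
    simpa using ((hasDerivAt_id b).const_mul (2 * N₀)).add_const c
  have hq : HasDerivAt (fun x => (2 * N₀ * x + 2 * h * p) / (2 * N₀ * x + h * p))
      ((2 * N₀ * (2 * N₀ * b + h * p) - (2 * N₀ * b + 2 * h * p) * (2 * N₀)) /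
        (2 * N₀ * b + h * p) ^ 2) b :=
    (hlin _).div (hlin _) hu.ne'
  refine ((hq.log (div_pos hv hu).ne').div_const (log 2)).congr_deriv ?_
  have := log_pos one_lt_two
  field_simp
  ring

lemma rateF_hasDerivAt (hh : 0 < h) (hp : 0 < p) (hN : 0 < N₀) (hb : 0 < b) :
    HasDerivAt (rateF h p N₀) (rateF' h p N₀ b) b := by
  have hratio : ∀ᶠ x in nhds b, rateF h p N₀ x =
      x * logb 2 ((2 * N₀ * x + 2 * h * p) / (2 * N₀ * x + h * p)) := by
    filter_upwards [Ioi_mem_nhds hb] with x hx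
    have hu : 0 < 2 * N₀ * x + h * p := by have : (0:ℝ) < x := hx; positivity
    rw [rateF, one_add_div hu.ne']
    ring_nf
  refine (((hasDerivAt_id' b).mul (hasDerivAt_logb_rateRatio hh hp hN hb)).congr_of_eventuallyEq
    hratio).congr_deriv ?_
  rw [rateF']
  ring

lemma rateF'_hasDerivAt (hh : 0 < h) (hp : 0 < p) (hN : 0 < N₀) (hb : 0 < b) :
    HasDerivAt (rateF' h p N₀)
      (-(2 * N₀ * (h * p) ^ 2 * (3 * (2 * N₀) * b + 4 * (h * p))) /
        (log 2 * ((2 * N₀ * b + 2 * h * p) * (2 * N₀ * b + h * p)) ^ 2)) b := by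
  have hu : 0 < 2 * N₀ * b + h * p := by positivity
  have hv : 0 < 2 * N₀ * b + 2 * h * p := by positivity
  have hlin (c : ℝ) : HasDerivAt (fun x => 2 * N₀ * x + c) (2 * N₀) b := by
    simpa using ((hasDerivAt_id b).const_mul (2 * N₀)).add_const c
  have hnum : HasDerivAt (fun x => 2 * N₀ * x * h * p) (2 * N₀ * h * p) b := by
    simpa using (((hasDerivAt_id b).const_mul (2 * N₀)).mul_const h).mul_const p
  have hden : HasDerivAt
      (fun x => log 2 * (2 * N₀ * x + 2 * h * p) * (2 * N₀ * x + h * p))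
      (log 2 * (2 * N₀) * (2 * N₀ * b + h * p) + log 2 * (2 * N₀ * b + 2 * h * p) * (2 * N₀)) b :=
    ((hlin _).const_mul (log 2)).mul (hlin _)
  have hlog2 := log_pos one_lt_two
  refine ((hasDerivAt_logb_rateRatio hh hp hN hb).sub
    (hnum.div hden (by positivity))).congr_deriv ?_
  field_simp
  ring

lemma rateF_pos (hh : 0 < h) (hp : 0 < p) (hN : 0 < N₀) (hb : 0 < b) :
    0 < rateF h p N₀ b :=
  mul_pos hb (logb_pos one_lt_two (lt_add_of_pos_right 1 (by positivity)))

lemma rateF'_pos (hh : 0 < h) (hp : 0 < p) (hN : 0 < N₀) (hb : 0 < b) :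
    0 < rateF' h p N₀ b := by
  rw [rateF', logb]
  set u := 2 * N₀ * b + h * p
  set v := 2 * N₀ * b + 2 * h * p
  have hu : 0 < u := by positivity
  have hv : 0 < v := by positivity
  -- `log y ≥ 1 - 1/y` at `y = v/u`, and `1 - u/v` exceeds the subtracted term by `(hp)²/(uv)`
  have hlog : 1 - (v / u)⁻¹ ≤ log (v / u) := one_sub_inv_le_log_of_pos (by positivity)
  have hgap : 1 - (v / u)⁻¹ - 2 * N₀ * b * h * p / (v * u) = (h * p) ^ 2 / (v * u) := by
    field_simp
    ring
  have hterm : 2 * N₀ * b * h * p / (v * u) < log (v / u) := by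
    have : 0 < (h * p) ^ 2 / (v * u) := by positivity
    linarith
  have hsplit : log (v / u) / log 2 - 2 * N₀ * b * h * p / (log 2 * v * u) =
      (log (v / u) - 2 * N₀ * b * h * p / (v * u)) / log 2 := by
    rw [sub_div, div_div, mul_comm (v * u), ← mul_assoc]
  rw [hsplit]
  exact div_pos (sub_pos.mpr hterm) (log_pos one_lt_two)

lemma rateF_strictMonoOn (hh : 0 < h) (hp : 0 < p) (hN : 0 < N₀) :
    StrictMonoOn (rateF h p N₀) (Ioi 0) := by
  refine strictMonoOn_of_deriv_pos (convex_Ioi 0)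
    (fun x hx => (rateF_hasDerivAt hh hp hN hx).continuousAt.continuousWithinAt) fun x hx => ?_
  rw [interior_Ioi] at hx
  rw [(rateF_hasDerivAt hh hp hN hx).deriv]
  exact rateF'_pos hh hp hN hx

lemma rateF'_strictAntiOn (hh : 0 < h) (hp : 0 < p) (hN : 0 < N₀) :
    StrictAntiOn (rateF' h p N₀) (Ioi 0) := by
  refine strictAntiOn_of_deriv_neg (convex_Ioi 0)
    (fun x hx => (rateF'_hasDerivAt hh hp hN hx).continuousAt.continuousWithinAt) fun x hx => ?_
  rw [interior_Ioi] at hx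
  rw [(rateF'_hasDerivAt hh hp hN hx).deriv, neg_div]
  have : (0 : ℝ) < x := hx
  have := log_pos one_lt_two
  have : 0 < 2 * N₀ * x + h * p := by positivity
  exact neg_neg_of_pos (by positivity)

lemma rateG_pos (hh : 0 < h) (hp : 0 < p) (hN : 0 < N₀) (hQ : 0 < Q) (hb : 0 < b) :
    0 < rateG h p N₀ Q b := by
  have := rateF_pos hh hp hN hb
  have := rateF'_pos hh hp hN hb
  rw [rateG]
  positivity

lemma rateG_strictAntiOn (hh : 0 < h) (hp : 0 < p) (hN : 0 < N₀) (hQ : 0 < Q) :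
    StrictAntiOn (rateG h p N₀ Q) (Ioi 0) := by
  intro x hx y hy hxy
  have hFx := rateF_pos hh hp hN hx
  have hF'x := rateF'_pos hh hp hN hx
  refine div_lt_div₀ ?_ ?_ (by positivity) (by positivity)
  · exact mul_lt_mul_of_pos_left (rateF'_strictAntiOn hh hp hN hx hy hxy) (by positivity)
  · exact pow_le_pow_left₀ hFx.le (rateF_strictMonoOn hh hp hN hx hy hxy).le 2

end Calculus

lemma StrictAntiOn.continuousOn_of_isOpen_image {α β : Type*} [LinearOrder α]
    [TopologicalSpace α] [OrderTopology α] [LinearOrder β] [TopologicalSpace β] [OrderTopology β]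
    [DenselyOrdered β] {f : α → β} {s : Set α} (hf : StrictAntiOn f s) (hs : IsOpen s)
    (hfs : IsOpen (f '' s)) : ContinuousOn f s := fun _ ha =>
  (hf.dual_right.continuousAt_of_image_mem_nhds (hs.mem_nhds ha)
    (hfs.mem_nhds (mem_image_of_mem f ha))).continuousWithinAt

section RightInverse

variable {α β : Type*} [LinearOrder α] [LinearOrder β] {g : α → β} {f : β → α}
  {s : Set α} {t : Set β}

lemma StrictAntiOn.strictAntiOn_of_leftInvOn (hg : StrictAntiOn g s) (hf : MapsTo f t s)
    (hgf : LeftInvOn g f t) : StrictAntiOn f t := fun a ha b hb hab =>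
  (hg.lt_iff_gt (hf ha) (hf hb)).mp (by rwa [hgf ha, hgf hb])

lemma StrictAntiOn.image_eq_of_leftInvOn (hg : StrictAntiOn g s) (hgst : MapsTo g s t)
    (hf : MapsTo f t s) (hgf : LeftInvOn g f t) : f '' t = s :=
  (LeftInvOn.surjOn (hg.injOn.rightInvOn_of_leftInvOn hgf hgst hf) hgst).image_eq_of_mapsTo hf

end RightInverse

section SumMax

variable {ι α : Type*} [Fintype ι] (L : ι → ℝ) {f : ι → α → ℝ}

lemma antitoneOn_sum_max [Preorder α] {s : Set α} (hf : ∀ k, AntitoneOn (f k) s) :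
    AntitoneOn (fun x => ∑ k, max (L k) (f k x)) s := fun _ ha _ hb hab =>
  Finset.sum_le_sum fun k _ => max_le_max le_rfl (hf k ha hb hab)

lemma sum_max_lt_sum_max [PartialOrder α] {s : Set α} (hf : ∀ k, StrictAntiOn (f k) s) {a b : α}
    (ha : a ∈ s) (hb : b ∈ s) (hab : a < b) (hLb : ∑ k, L k < ∑ k, max (L k) (f k b)) :
    ∑ k, max (L k) (f k b) < ∑ k, max (L k) (f k a) := by
  obtain ⟨k, hk⟩ : ∃ k, L k < f k b := by
    by_contra! hle
    exact hLb.ne (Finset.sum_congr rfl fun k _ => (max_eq_left (hle k)).symm)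
  refine Finset.sum_lt_sum (fun i _ => max_le_max le_rfl ((hf i).antitoneOn ha hb hab.le))
    ⟨k, Finset.mem_univ k, ?_⟩
  rw [max_eq_right hk.le]
  exact ((hf k ha hb hab).trans_le (le_max_right _ _))

variable {L}

lemma exists_sum_max_eq [Nonempty ι] {f : ι → ℝ → ℝ} (hL : ∀ k, 0 < L k)
    (hf_anti : ∀ k, StrictAntiOn (f k) (Ioi 0)) (hf_img : ∀ k, f k '' Ioi 0 = Ioi 0) {B : ℝ}
    (hLB : ∑ k, L k < B) : ∃ x, 0 < x ∧ ∑ k, max (L k) (f k x) = B := by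
  have hcont : ContinuousOn (fun x => ∑ k, max (L k) (f k x)) (Ioi 0) :=
    continuousOn_finsetSum _ fun k _ => continuousOn_const.sup
      ((hf_anti k).continuousOn_of_isOpen_image isOpen_Ioi (by rw [hf_img k]; exact isOpen_Ioi))
  choose xL hxL_pos hxL using fun k => (hf_img k).symm.subset (mem_Ioi.mpr (hL k))
  obtain ⟨x_hi, hx_hi⟩ := Finite.exists_le xL
  have hx_hi_pos : 0 < x_hi := (hxL_pos (Classical.arbitrary ι)).trans_le (hx_hi _)
  have hS_hi : ∑ k, max (L k) (f k x_hi) = ∑ k, L k := Finset.sum_congr rfl fun k _ =>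
    max_eq_left ((hxL k).symm ▸ (hf_anti k).antitoneOn (hxL_pos k) hx_hi_pos (hx_hi k))
  have hB : 0 < B := (Finset.sum_pos (fun k _ => hL k) Finset.univ_nonempty).trans hLB
  obtain ⟨k₀⟩ := ‹Nonempty ι›
  obtain ⟨x_lo, hx_lo_pos, hx_lo⟩ := (hf_img k₀).symm.subset (mem_Ioi.mpr hB)
  have hS_lo : B ≤ ∑ k, max (L k) (f k x_lo) :=
    (hx_lo.symm.trans_le (le_max_right _ _)).trans
      (Finset.single_le_sum (f := fun k => max (L k) (f k x_lo))
        (fun k _ => (hL k).le.trans (le_max_left _ _)) (Finset.mem_univ k₀))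
  exact isPreconnected_Ioi.intermediate_value hx_hi_pos hx_lo_pos hcont ⟨hS_hi ▸ hLB.le, hS_lo⟩

lemma existsUnique_sum_max_eq [Nonempty ι] {f : ι → ℝ → ℝ} (hL : ∀ k, 0 < L k)
    (hf_anti : ∀ k, StrictAntiOn (f k) (Ioi 0)) (hf_img : ∀ k, f k '' Ioi 0 = Ioi 0) {B : ℝ}
    (hLB : ∑ k, L k < B) : ∃! x, 0 < x ∧ ∑ k, max (L k) (f k x) = B := by
  obtain ⟨x, hx, hxB⟩ := exists_sum_max_eq hL hf_anti hf_img hLB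
  have two_roots_absurd {a b : ℝ} (ha : 0 < a) (hb : 0 < b) (hab : a < b)
      (haB : ∑ k, max (L k) (f k a) = B) (hbB : ∑ k, max (L k) (f k b) = B) : False :=
    (sum_max_lt_sum_max L hf_anti ha hb hab (hbB ▸ hLB)).ne (hbB.trans haB.symm)
  refine ⟨x, ⟨hx, hxB⟩, fun y ⟨hy, hyB⟩ => le_antisymm ?_ ?_⟩
  · exact not_lt.1 fun hxy => two_roots_absurd hx hy hxy hxB hyB
  · exact not_lt.1 fun hyx => two_roots_absurd hy hx hyx hyB hxB

end SumMax

theorem stmt_17_general (K : ℕ) (hK : 0 < K)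
    (h p L : Fin K → ℝ) (Q N₀ B : ℝ)
    (hh : ∀ k, 0 < h k) (hp : ∀ k, 0 < p k) (hL : ∀ k, 0 < L k)
    (hQ : 0 < Q) (hN : 0 < N₀)
    (F F' G : Fin K → ℝ → ℝ)
    (hF : ∀ k (b : ℝ), F k b =
      b * Real.logb 2 (1 + h k * p k / (2 * N₀ * b + h k * p k)))
    (hF' : ∀ k (b : ℝ), F' k b =
      Real.logb 2 ((2 * N₀ * b + 2 * h k * p k) / (2 * N₀ * b + h k * p k)) -
        (2 * N₀ * b * h k * p k) /
          (Real.log 2 * (2 * N₀ * b + 2 * h k * p k) * (2 * N₀ * b + h k * p k)))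
    (hG : ∀ k (b : ℝ), G k b = p k * Q * F' k b / (F k b) ^ 2)
    (β : Fin K → ℝ → ℝ)
    (hβ : ∀ k (Θ : ℝ), 0 < Θ →
      (0 < β k Θ ∧ G k (β k Θ) = Θ ∧ ∀ b : ℝ, 0 < b → G k b = Θ → b = β k Θ))
    (S : ℝ → ℝ)
    (hS : ∀ Θ : ℝ, S Θ = ∑ k : Fin K, max (L k) (β k Θ)) :
    (∀ Θ₁ Θ₂ : ℝ, 0 < Θ₁ → Θ₁ ≤ Θ₂ → S Θ₂ ≤ S Θ₁) ∧
    ((∑ k : Fin K, L k) < B → ∃! Θ : ℝ, 0 < Θ ∧ S Θ = B) := by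
  have hG_eq k : G k = rateG (h k) (p k) N₀ Q := funext fun b => by rw [hG, hF, hF']; rfl
  have hG_anti k : StrictAntiOn (G k) (Ioi 0) := hG_eq k ▸ rateG_strictAntiOn (hh k) (hp k) hN hQ
  have hG_maps k : MapsTo (G k) (Ioi 0) (Ioi 0) := fun _ hb =>
    hG_eq k ▸ rateG_pos (hh k) (hp k) hN hQ hb
  have hβ_maps k : MapsTo (β k) (Ioi 0) (Ioi 0) := fun Θ hΘ => (hβ k Θ hΘ).1
  have hGβ k : LeftInvOn (G k) (β k) (Ioi 0) := fun Θ hΘ => (hβ k Θ hΘ).2.1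
  have hβ_anti k := (hG_anti k).strictAntiOn_of_leftInvOn (hβ_maps k) (hGβ k)
  have hβ_img k := (hG_anti k).image_eq_of_leftInvOn (hG_maps k) (hβ_maps k) (hGβ k)
  have : Nonempty (Fin K) := ⟨⟨0, hK⟩⟩
  rw [funext hS]
  exact ⟨fun Θ₁ Θ₂ hΘ₁ hΘ₁₂ => antitoneOn_sum_max L (fun k => (hβ_anti k).antitoneOn) hΘ₁
      (hΘ₁.trans_le hΘ₁₂) hΘ₁₂,
    existsUnique_sum_max_eq hL hβ_anti hβ_img⟩

/-- For each group `k`, let `β k Θ` be the unique positive solution of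
`G_k(β) = Θ` (which exists for every `Θ > 0`), and set
`S(Θ) = Σ_k max(L_k, β_k(Θ))`. Then `S` is antitone in `Θ` on `(0, ∞)`, and if
`Σ_k L_k < B`, there exists a unique `Θ* > 0` with `S(Θ*) = B`. -/
theorem stmt_17 (K : ℕ) (hK : 0 < K)
    (h p L : Fin K → ℝ) (Q N₀ B : ℝ)
    (hh : ∀ k, 0 < h k) (hp : ∀ k, 0 < p k) (hL : ∀ k, 0 < L k)
    (hQ : 0 < Q) (hN : 0 < N₀) (hB : 0 < B)
    (F F' G : Fin K → ℝ → ℝ)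
    (hF : ∀ k (b : ℝ), F k b =
      b * Real.logb 2 (1 + h k * p k / (2 * N₀ * b + h k * p k)))
    (hF' : ∀ k (b : ℝ), F' k b =
      Real.logb 2 ((2 * N₀ * b + 2 * h k * p k) / (2 * N₀ * b + h k * p k)) -
        (2 * N₀ * b * h k * p k) /
          (Real.log 2 * (2 * N₀ * b + 2 * h k * p k) * (2 * N₀ * b + h k * p k)))
    (hG : ∀ k (b : ℝ), G k b = p k * Q * F' k b / (F k b) ^ 2)
    (β : Fin K → ℝ → ℝ)
    (hβ : ∀ k (Θ : ℝ), 0 < Θ →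
      (0 < β k Θ ∧ G k (β k Θ) = Θ ∧ ∀ b : ℝ, 0 < b → G k b = Θ → b = β k Θ))
    (S : ℝ → ℝ)
    (hS : ∀ Θ : ℝ, S Θ = ∑ k : Fin K, max (L k) (β k Θ)) :
    (∀ Θ₁ Θ₂ : ℝ, 0 < Θ₁ → Θ₁ ≤ Θ₂ → S Θ₂ ≤ S Θ₁) ∧
    ((∑ k : Fin K, L k) < B → ∃! Θ : ℝ, 0 < Θ ∧ S Θ = B) :=
  stmt_17_general K hK h p L Q N₀ B hh hp hL hQ hN F F' G hF hF' hG β hβ S hS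
end
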